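/- For every integer N ≥ 1, μ([0, 1/(2N+1)] ∪ [N/(N+1), 1]) = (2/log(2+√3)) · log(1 + 1/(N + (√3−1)/2)); equivalently, the μ-measure of the set of x with first SCF digit a₁(x) > N equals (2/log(2+√3)) · log((2N+√3+1)/(2N+√3−1)). -/

import Mathlib

/-!
The density `fdens` has the explicit primitive
`F x = (log (1 + √3 x) - log (1 - (2 - √3) x)) / log (2 + √3)`, and both tails
`[0, 1/(2N+1)]` and `[N/(N+1), 1]` (exchanged by the involution `ι`, which preserves `μ`) have
`μ`-measure `log ((2N+√3+1)/(2N+√3-1)) / log (2 + √3)`.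

Every valid branch of digit `k` lies in `[1/(2k+1), k/(k+1)]` and in
`[0, 1/(2k-1)] ∪ [(k-1)/k, 1]`, and the valid branches cover `(0, 1)`. Hence an irrational
`x ∈ (0, 1)` has `a₁(x) > N` exactly when it lies in one of the tails, and the remaining points
are rational, hence `μ`-null.
-/

open MeasureTheory Real Set Filter Topology

namespace SCF

/-- The involution `ι(x) = (1−x)/(1+x)`. -/
noncomputable def iota (x : ℝ) : ℝ := (1 - x) / (1 + x)

/-- Even continued-fraction step.  For `y ∈ (0,1/2]` one has
`⌊(1/y+1)/2⌋ = k` whenever `1/y ∈ (2k−1, 2k+1)`, so `Te y = |1/y − 2k|`;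
explicitly `Te y = 1/y − 2` on `[1/3,1/2]`, `Te y = 1/y − 2k` on
`[1/(2k+1), 1/(2k))` and `Te y = 2k − 1/y` on `[1/(2k), 1/(2k−1))` (`k ≥ 2`). -/
noncomputable def Te (y : ℝ) : ℝ := |1 / y - 2 * (⌊(1 / y + 1) / 2⌋ : ℝ)|

/-- The spliced continued fraction (SCF) map `T : [0,1] → [0,1]`, with
`T 0 = 0`, `T 1 = 1`.  On `(0,1/2]` it is the even continued fraction map
(see `Te`), and on `(1/2,1)` it is the odd–odd map, which is the conjugate
`ι ∘ Te ∘ ι` of the even map; this agrees with the branchwise definition: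
`T x = (k x − (k−1))/(k − (k+1) x)` on `((k−1)/k, (2k−1)/(2k+1)]` and
`T x = (k − (k+1) x)/(k x − (k−1))` on `((2k−1)/(2k+1), k/(k+1)]` for `k ≥ 2`. -/
noncomputable def T (x : ℝ) : ℝ :=
  if x ≤ 0 then 0
  else if 1 ≤ x then 1
  else if x ≤ 1 / 2 then Te x
  else iota (Te (iota x))

/-- Parity label of a digit: `e` (even cusp) or `o` (odd–odd cusp). -/
inductive Par | e | o
deriving DecidableEq

/-- A candidate SCF digit `(a, ε)_s`. -/
structure Digit where
  a : ℤ
  eps : ℤ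
  s : Par
deriving DecidableEq

/-- The digit set `𝒜 = {(k,ε)_s : k ≥ 2, ε = ±1, s ∈ {e,o}} ∪ {(1,+1)_e}`. -/
def Digit.Valid (d : Digit) : Prop :=
  (2 ≤ d.a ∧ (d.eps = 1 ∨ d.eps = -1)) ∨ (d.a = 1 ∧ d.eps = 1 ∧ d.s = Par.e)

/-- The branch intervals `I_{(a,ε)_s}` of the SCF map. -/
noncomputable def branch (d : Digit) : Set ℝ :=
  match d.s with
  | Par.e =>
      if d.a = 1 then Set.Icc (1/3 : ℝ) (1/2)
      else if d.eps = 1 then Set.Ico (1 / (2 * (d.a : ℝ) + 1)) (1 / (2 * (d.a : ℝ)))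
      else Set.Ico (1 / (2 * (d.a : ℝ))) (1 / (2 * (d.a : ℝ) - 1))
  | Par.o =>
      if d.eps = 1 then
        Set.Ioc ((2 * (d.a : ℝ) - 1) / (2 * (d.a : ℝ) + 1)) ((d.a : ℝ) / ((d.a : ℝ) + 1))
      else
        Set.Ioc (((d.a : ℝ) - 1) / (d.a : ℝ)) ((2 * (d.a : ℝ) - 1) / (2 * (d.a : ℝ) + 1))

open Classical in
/-- The SCF digit of a point `y` (the unique valid digit `d` with `y ∈ I_d`;
well defined for every `y ∈ (0,1)`). -/
noncomputable def digit (y : ℝ) : Digit :=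
  if h : ∃ d : Digit, d.Valid ∧ y ∈ branch d then h.choose else ⟨1, 1, Par.e⟩

/-- The `n`-th SCF digit `(a_n(x), ε_n(x))_{s_n(x)}` of `x`, `n ≥ 1`,
determined by `T^[n−1] x ∈ I_{(a_n,ε_n)_{s_n}}`. -/
noncomputable def dig (n : ℕ) (x : ℝ) : Digit := digit (T^[n - 1] x)

/-- The `n`-th SCF partial quotient `a_n(x)`. -/
noncomputable def a (n : ℕ) (x : ℝ) : ℤ := (dig n x).a

/-- The invariant density `f_μ`. -/
noncomputable def fdens (x : ℝ) : ℝ :=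
  2 / (Real.log (2 + Real.sqrt 3) * (1 - (2 - Real.sqrt 3) * x) * (1 + Real.sqrt 3 * x))

/-- The absolutely continuous `T`-invariant probability measure `μ` on `(0,1)`. -/
noncomputable def mu : Measure ℝ :=
  (volume.restrict (Set.Ioo (0 : ℝ) 1)).withDensity fun x => ENNReal.ofReal (fdens x)

/-- The inverse branches `h_{(a,ε)_s}` of the SCF map `T`. -/
noncomputable def h (d : Digit) (x : ℝ) : ℝ :=
  match d.s with
  | Par.e => 1 / (2 * (d.a : ℝ) + (d.eps : ℝ) * x)
  | Par.o =>
      if d.eps = 1 then (((d.a : ℝ) - 1) * x + (d.a : ℝ)) / ((d.a : ℝ) * x + ((d.a : ℝ) + 1))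
      else ((d.a : ℝ) * x + ((d.a : ℝ) - 1)) / (((d.a : ℝ) + 1) * x + (d.a : ℝ))

/-- Composed inverse branch `h_{A^{(n)}} = h_{A₁} ∘ ⋯ ∘ h_{A_n}` of a word. -/
noncomputable def hWord (l : List Digit) : ℝ → ℝ :=
  l.foldr (fun d g => h d ∘ g) id

/-- The dual inverse branches `bar h_{(b,η)_t}`. -/
noncomputable def hbar (d : Digit) (y : ℝ) : ℝ :=
  match d.s with
  | Par.e => (d.eps : ℝ) / (2 * (d.a : ℝ) + y)
  | Par.o =>
      1 / (1 + (d.eps : ℝ) / (((d.a : ℝ) - ((max 0 d.eps : ℤ) : ℝ)) + 1 / (1 + y)))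

/-- The matrix `M_{(a,ε)_s}` associated with the inverse branch `h_{(a,ε)_s}`. -/
noncomputable def Mdig (d : Digit) : Matrix (Fin 2) (Fin 2) ℝ :=
  match d.s with
  | Par.e => !![0, 1; (d.eps : ℝ), 2 * (d.a : ℝ)]
  | Par.o =>
      !![(d.a : ℝ) - ((max 0 d.eps : ℤ) : ℝ), (d.a : ℝ) - ((max 0 d.eps : ℤ) : ℝ) + (d.eps : ℝ);
         (d.a : ℝ) - ((max 0 d.eps : ℤ) : ℝ) + 1, (d.a : ℝ) - ((max 0 d.eps : ℤ) : ℝ) + (d.eps : ℝ) + 1]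

/-- `M_n(x) = M_{(a₁,ε₁)_{s₁}} ⋯ M_{(a_n,ε_n)_{s_n}}`. -/
noncomputable def Mn (n : ℕ) (x : ℝ) : Matrix (Fin 2) (Fin 2) ℝ :=
  ((List.range n).map fun i => Mdig (digit (T^[i] x))).prod

/-- `P_n(x)`: the `(1,2)`-entry of `M_n(x)` (numerator of the `n`-th convergent). -/
noncomputable def Pc (n : ℕ) (x : ℝ) : ℝ := Mn n x 0 1

/-- `Q_n(x)`: the `(2,2)`-entry of `M_n(x)` (denominator of the `n`-th convergent). -/
noncomputable def Qc (n : ℕ) (x : ℝ) : ℝ := Mn n x 1 1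

lemma one_lt_sqrt_three : 1 < √3 :=
  (Real.lt_sqrt zero_le_one).2 (by norm_num)

lemma sqrt_three_lt_two : √3 < 2 :=
  (Real.sqrt_lt' two_pos).2 (by norm_num)

lemma log_two_add_sqrt_three_pos : 0 < log (2 + √3) :=
  Real.log_pos (by linarith [Real.sqrt_nonneg 3])

lemma one_sub_two_sub_sqrt_three_mul_pos {x : ℝ} (hx : x ≤ 1) : 0 < 1 - (2 - √3) * x := by
  nlinarith [one_lt_sqrt_three, sqrt_three_lt_two]

noncomputable def fdensPrimitive (x : ℝ) : ℝ :=
  (log (1 + √3 * x) - log (1 - (2 - √3) * x)) / log (2 + √3)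

lemma fdensPrimitive_zero : fdensPrimitive 0 = 0 := by simp [fdensPrimitive]

lemma fdens_pos {x : ℝ} (hx₀ : 0 ≤ x) (hx₁ : x ≤ 1) : 0 < fdens x := by
  have := one_sub_two_sub_sqrt_three_mul_pos hx₁
  have := log_two_add_sqrt_three_pos
  unfold fdens
  positivity

lemma continuousOn_fdens : ContinuousOn fdens (Icc 0 1) := by
  refine continuousOn_const.div (by fun_prop) fun x hx ↦ ?_
  have := hx.1
  have := one_sub_two_sub_sqrt_three_mul_pos hx.2
  have := log_two_add_sqrt_three_pos
  positivity

lemma hasDerivAt_fdensPrimitive {x : ℝ} (hx₀ : 0 ≤ x) (hx₁ : x ≤ 1) :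
    HasDerivAt fdensPrimitive (fdens x) x := by
  have hA : 0 < 1 + √3 * x := by positivity
  have hB := one_sub_two_sub_sqrt_three_mul_pos hx₁
  have hL := log_two_add_sqrt_three_pos.ne'
  have hlogA : HasDerivAt (fun y ↦ log (1 + √3 * y)) (√3 / (1 + √3 * x)) x := by
    simpa using (((hasDerivAt_id x).const_mul √3).const_add 1).log hA.ne'
  have hlogB : HasDerivAt (fun y ↦ log (1 - (2 - √3) * y)) (-(2 - √3) / (1 - (2 - √3) * x)) x := by
    simpa using (((hasDerivAt_id x).const_mul (2 - √3)).const_sub 1).log hB.ne'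
  refine ((hlogA.sub hlogB).div_const _).congr_deriv ?_
  have key : √3 * (1 - (2 - √3) * x) + (2 - √3) * (1 + √3 * x) = 2 := by ring
  unfold fdens
  generalize 1 + √3 * x = A at *
  generalize 1 - (2 - √3) * x = B at *
  field_simp
  linear_combination key

lemma mu_Ioc {p q : ℝ} (hp : 0 ≤ p) (hpq : p ≤ q) (hq : q ≤ 1) :
    mu (Ioc p q) = ENNReal.ofReal (fdensPrimitive q - fdensPrimitive p) := by
  have hsub : Icc p q ⊆ Icc 0 1 := Icc_subset_Icc hp hq
  have hint : IntervalIntegrable fdens volume p q :=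
    (continuousOn_fdens.mono (uIcc_of_le hpq ▸ hsub)).intervalIntegrable
  have hnonneg : 0 ≤ᵐ[volume.restrict (Ioc p q)] fdens :=
    (ae_restrict_iff' measurableSet_Ioc).2 <| .of_forall fun x hx ↦
      (fdens_pos (hp.trans hx.1.le) (hx.2.trans hq)).le
  have hFTC : ∫ x in p..q, fdens x = fdensPrimitive q - fdensPrimitive p :=
    intervalIntegral.integral_eq_sub_of_hasDerivAt (fun x hx ↦
      hasDerivAt_fdensPrimitive (hp.trans (uIcc_of_le hpq ▸ hx).1)
        ((uIcc_of_le hpq ▸ hx).2.trans hq)) hint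
  rw [mu, Measure.restrict_congr_set Ioo_ae_eq_Icc, withDensity_apply _ measurableSet_Ioc,
    Measure.restrict_restrict measurableSet_Ioc,
    inter_eq_left.2 (Ioc_subset_Icc_self.trans hsub),
    ← ofReal_integral_eq_lintegral_ofReal ((intervalIntegrable_iff_integrableOn_Ioc_of_le hpq).1 hint)
      hnonneg, ← intervalIntegral.integral_of_le hpq, hFTC]

lemma fdensPrimitive_eq_log_div {x : ℝ} (hx₀ : 0 ≤ x) (hx₁ : x ≤ 1) :
    fdensPrimitive x = log ((1 + √3 * x) / (1 - (2 - √3) * x)) / log (2 + √3) := by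
  rw [fdensPrimitive, Real.log_div (by positivity) (one_sub_two_sub_sqrt_three_mul_pos hx₁).ne']

lemma fdensPrimitive_one_div_two_mul_add_one {n : ℝ} (hn : 0 ≤ n) :
    fdensPrimitive (1 / (2 * n + 1)) =
      log ((2 * n + √3 + 1) / (2 * n + √3 - 1)) / log (2 + √3) := by
  have h1 := one_lt_sqrt_three
  rw [fdensPrimitive_eq_log_div (by positivity) ((div_le_one (by positivity)).2 (by linarith))]
  congr 2
  field_simp
  ring

lemma fdensPrimitive_one_sub_div_add_one {n : ℝ} (hn : 0 ≤ n) :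
    fdensPrimitive 1 - fdensPrimitive (n / (n + 1)) =
      log ((2 * n + √3 + 1) / (2 * n + √3 - 1)) / log (2 + √3) := by
  have h1 := one_lt_sqrt_three
  have hs₁ : n / (n + 1) ≤ 1 := (div_le_one (by positivity)).2 (by linarith)
  have hA : 0 < 1 + √3 * (n / (n + 1)) := by positivity
  have hB := one_sub_two_sub_sqrt_three_mul_pos hs₁
  have hA₁ : 0 < 1 + √3 * 1 := by positivity
  have hB₁ := one_sub_two_sub_sqrt_three_mul_pos le_rfl
  rw [fdensPrimitive_eq_log_div zero_le_one le_rfl, fdensPrimitive_eq_log_div (by positivity) hs₁,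
    ← sub_div, ← Real.log_div (div_pos hA₁ hB₁).ne' (div_pos hA hB).ne']
  congr 2
  have hsq : √3 ^ 2 = 3 := Real.sq_sqrt (by norm_num)
  have hρ : 2 * n + √3 - 1 ≠ 0 := by linarith
  rw [div_div_div_eq, div_eq_div_iff (mul_pos hB₁ hA).ne' hρ]
  field_simp
  linear_combination (-2 * n) * hsq

instance : NullSingletonClass mu := by unfold mu; infer_instance

lemma mu_Icc_union_Icc {n : ℝ} (hn : 1 ≤ n) :
    mu (Icc 0 (1 / (2 * n + 1)) ∪ Icc (n / (n + 1)) 1) =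
      ENNReal.ofReal (2 / log (2 + √3) * log ((2 * n + √3 + 1) / (2 * n + √3 - 1))) := by
  have ht₁ : 1 / (2 * n + 1) ≤ n / (n + 1) := by
    rw [div_le_div_iff₀ (by positivity) (by positivity)]; nlinarith
  have hs₁ : n / (n + 1) ≤ 1 := (div_le_one (by positivity)).2 (by linarith)
  have hρ : 1 ≤ (2 * n + √3 + 1) / (2 * n + √3 - 1) := by
    rw [le_div_iff₀ (by linarith [one_lt_sqrt_three])]; linarith
  have hpiece : 0 ≤ log ((2 * n + √3 + 1) / (2 * n + √3 - 1)) / log (2 + √3) :=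
    div_nonneg (Real.log_nonneg hρ) log_two_add_sqrt_three_pos.le
  have hdisj : Disjoint (Ioc 0 (1 / (2 * n + 1))) (Ioc (n / (n + 1)) 1) :=
    Ioc_disjoint_Ioc_of_le ht₁
  rw [measure_congr (Ioc_ae_eq_Icc.symm.union Ioc_ae_eq_Icc.symm),
    measure_union hdisj measurableSet_Ioc,
    mu_Ioc le_rfl (by positivity) (ht₁.trans hs₁), mu_Ioc (by positivity) hs₁ le_rfl,
    fdensPrimitive_one_div_two_mul_add_one (by linarith), fdensPrimitive_zero, sub_zero,
    fdensPrimitive_one_sub_div_add_one (by linarith), ← ENNReal.ofReal_add hpiece hpiece]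
  congr 1
  ring

lemma Digit.Valid.one_le {d : Digit} (hd : d.Valid) : 1 ≤ d.a := by
  rcases hd with ⟨h, -⟩ | ⟨h, -⟩ <;> omega

lemma branch_subset_cell {d : Digit} (hd : d.Valid) :
    (d.a = 1 ∧ branch d ⊆ Icc (1 / 3) (1 / 2)) ∨
      (2 ≤ d.a ∧ (branch d ⊆ Icc (1 / (2 * d.a + 1)) (1 / (2 * d.a - 1)) ∨
        branch d ⊆ Icc ((d.a - 1) / d.a) (d.a / (d.a + 1)))) := by
  obtain ⟨k, ε, s⟩ := d
  rcases hd with ⟨hk, hε⟩ | ⟨rfl, rfl, rfl⟩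
  · change 2 ≤ k at hk
    have hk' : (2 : ℝ) ≤ k := by exact_mod_cast hk
    refine .inr ⟨hk, ?_⟩
    rcases hε with rfl | rfl <;> cases s <;>
      simp only [branch, if_neg (show k ≠ 1 by omega), if_pos, if_neg (show (-1 : ℤ) ≠ 1 by decide)]
    · refine .inl (Ico_subset_Icc_self.trans (Icc_subset_Icc le_rfl ?_))
      exact one_div_le_one_div_of_le (by linarith) (by linarith)
    · refine .inr (Ioc_subset_Icc_self.trans (Icc_subset_Icc ?_ le_rfl))
      rw [div_le_div_iff₀ (by linarith) (by linarith)]; nlinarith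
    · refine .inl (Ico_subset_Icc_self.trans (Icc_subset_Icc ?_ le_rfl))
      exact one_div_le_one_div_of_le (by linarith) (by linarith)
    · refine .inr (Ioc_subset_Icc_self.trans (Icc_subset_Icc le_rfl ?_))
      rw [div_le_div_iff₀ (by linarith) (by linarith)]; nlinarith
  · left; simp [branch]

lemma branch_subset_Icc {d : Digit} (hd : d.Valid) :
    branch d ⊆ Icc (1 / (2 * d.a + 1)) (d.a / (d.a + 1)) := by
  rcases branch_subset_cell hd with ⟨ha, h⟩ | ⟨ha, h | h⟩
  · rw [ha]; norm_num; exact h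
  · have : (2 : ℝ) ≤ d.a := by exact_mod_cast ha
    refine h.trans (Icc_subset_Icc le_rfl ?_)
    rw [div_le_div_iff₀ (by linarith) (by linarith)]; nlinarith
  · have : (2 : ℝ) ≤ d.a := by exact_mod_cast ha
    refine h.trans (Icc_subset_Icc ?_ le_rfl)
    rw [div_le_div_iff₀ (by linarith) (by linarith)]; nlinarith

lemma branch_subset_tails {d : Digit} (hd : d.Valid) :
    branch d ⊆ Icc 0 (1 / (2 * d.a - 1)) ∪ Icc ((d.a - 1) / d.a) 1 := by
  rcases branch_subset_cell hd with ⟨ha, h⟩ | ⟨ha, h | h⟩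
  · rw [ha]; norm_num
    exact h.trans (Icc_subset_Icc (by norm_num) (by norm_num))
  · have : (2 : ℝ) ≤ d.a := by exact_mod_cast ha
    exact h.trans (Icc_subset_Icc (by positivity) le_rfl) |>.trans subset_union_left
  · have : (2 : ℝ) ≤ d.a := by exact_mod_cast ha
    refine h.trans (Icc_subset_Icc le_rfl ?_) |>.trans subset_union_right
    exact (div_le_one (by linarith)).2 (by linarith)

lemma exists_mem_Ico_one_div {y : ℝ} {n : ℤ} (hn : 0 < n) (hy : 0 < y) (hyn : y < 1 / n) :
    ∃ m : ℤ, n ≤ m ∧ y ∈ Ico (1 / ((m : ℝ) + 1)) (1 / m) := by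
  have hn' : (0 : ℝ) < n := by exact_mod_cast hn
  have hny : (n : ℝ) < 1 / y := (lt_one_div hy hn').1 hyn
  refine ⟨⌈1 / y⌉ - 1, ?_, ?_⟩
  · have := Int.lt_ceil.2 hny
    omega
  · have hm : (n : ℝ) ≤ ((⌈1 / y⌉ - 1 : ℤ) : ℝ) := by
      have := Int.lt_ceil.2 hny
      exact_mod_cast (by omega : n ≤ ⌈1 / y⌉ - 1)
    push_cast at hm ⊢
    constructor
    · rw [one_div_le (by linarith) hy]
      linarith [Int.le_ceil (1 / y)]
    · rw [lt_one_div hy (by linarith)]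
      linarith [Int.ceil_lt_add_one (1 / y)]

lemma exists_valid_mem_branch {x : ℝ} (hx : x ∈ Ioo 0 1) : ∃ d : Digit, d.Valid ∧ x ∈ branch d := by
  rcases lt_or_ge x (1 / 3) with hx₃ | hx₃
  · obtain ⟨m, hm, hxm⟩ := exists_mem_Ico_one_div (n := 3) (by norm_num) hx.1
      (by simpa using hx₃)
    obtain ⟨j, rfl | rfl⟩ := Int.even_or_odd' m
    · refine ⟨⟨j, 1, .e⟩, .inl ⟨by change 2 ≤ j; omega, .inl rfl⟩, ?_⟩
      simp only [branch, if_neg (show j ≠ 1 by omega), if_pos]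
      convert hxm using 3 <;> push_cast <;> ring
    · refine ⟨⟨j + 1, -1, .e⟩, .inl ⟨by change 2 ≤ j + 1; omega, .inr rfl⟩, ?_⟩
      simp only [branch, if_neg (show j + 1 ≠ 1 by omega), if_neg (show (-1 : ℤ) ≠ 1 by decide)]
      convert hxm using 3 <;> push_cast <;> ring
  rcases le_or_gt x (1 / 2) with hx₂ | hx₂
  · exact ⟨⟨1, 1, .e⟩, .inr ⟨rfl, rfl, rfl⟩, by simp only [branch, if_pos]; exact ⟨hx₃, hx₂⟩⟩
  obtain ⟨m, hm, hxm⟩ := exists_mem_Ico_one_div (y := 1 - x) (n := 2) (by norm_num)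
    (by linarith [hx.2]) (by push_cast; linarith)
  have hm' : (2 : ℝ) ≤ m := by exact_mod_cast hm
  have hlow : (m - 1) / m < x := by
    rw [sub_div, div_self (by positivity)]; linarith [hxm.2]
  have hhigh : x ≤ m / (m + 1) := by
    rw [show (m : ℝ) / (m + 1) = 1 - 1 / (m + 1) by field_simp; ring]; linarith [hxm.1]
  rcases le_or_gt x ((2 * m - 1) / (2 * m + 1)) with hmid | hmid
  · refine ⟨⟨m, -1, .o⟩, .inl ⟨hm, .inr rfl⟩, ?_⟩
    simp only [branch, if_neg (show (-1 : ℤ) ≠ 1 by decide)]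
    exact ⟨hlow, hmid⟩
  · refine ⟨⟨m, 1, .o⟩, .inl ⟨hm, .inl rfl⟩, ?_⟩
    simp only [branch, if_pos]
    exact ⟨hmid, hhigh⟩

lemma digit_spec {x : ℝ} (hx : x ∈ Ioo 0 1) : (digit x).Valid ∧ x ∈ branch (digit x) := by
  have h := exists_valid_mem_branch hx
  rw [digit, dif_pos h]
  exact h.choose_spec

lemma lt_a_one_iff {N : ℕ} {x : ℝ} (hx : x ∈ Ioo 0 1) (hirr : Irrational x) :
    (N : ℤ) < a 1 x ↔ x ∈ Icc 0 (1 / (2 * (N : ℝ) + 1)) ∪ Icc ((N : ℝ) / (N + 1)) 1 := by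
  obtain ⟨hd, hmem⟩ := digit_spec hx
  change (N : ℤ) < (digit x).a ↔ _
  have hk : (1 : ℝ) ≤ (digit x).a := by exact_mod_cast hd.one_le
  constructor
  · intro hNk
    have hNk' : (N : ℝ) + 1 ≤ (digit x).a := by exact_mod_cast hNk
    refine union_subset_union (Icc_subset_Icc le_rfl ?_) (Icc_subset_Icc ?_ le_rfl)
      (branch_subset_tails hd hmem)
    · exact one_div_le_one_div_of_le (by positivity) (by linarith)
    · rw [div_le_div_iff₀ (by positivity) (by linarith)]; nlinarith
  · -- a branch of digit `≤ N` lies in `[1/(2N+1), N/(N+1)]`, which meets the tails only at its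
    -- two rational endpoints
    intro hU
    by_contra! hkN
    have hkN' : ((digit x).a : ℝ) ≤ N := by exact_mod_cast hkN
    have hin : x ∈ Icc (1 / (2 * (N : ℝ) + 1)) (N / (N + 1)) := by
      refine Icc_subset_Icc ?_ ?_ (branch_subset_Icc hd hmem)
      · exact one_div_le_one_div_of_le (by linarith) (by linarith)
      · rw [div_le_div_iff₀ (by linarith) (by positivity)]; nlinarith
    rcases hU with hU | hU
    · exact hirr.ne_rational 1 (2 * N + 1) (by push_cast; exact le_antisymm hU.2 hin.1)
    · exact hirr.ne_rational N (N + 1) (by push_cast; exact le_antisymm hin.2 hU.1)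

lemma ae_mu_mem_Ioo_irrational : ∀ᵐ x ∂mu, x ∈ Ioo 0 1 ∧ Irrational x := by
  have hac : mu ≪ volume.restrict (Ioo 0 1) := withDensity_absolutelyContinuous _ _
  refine hac.ae_le ((ae_restrict_mem measurableSet_Ioo).and (ae_restrict_of_ae ?_))
  exact (countable_range ((↑) : ℚ → ℝ)).ae_notMem volume

/-- the μ-measure of `{a₁ > N} = [0,1/(2N+1)] ∪ [N/(N+1),1]`. -/
theorem measure_first_digit_large :
    ∀ N : ℕ, 1 ≤ N →
      mu (Set.Icc (0 : ℝ) (1 / (2 * (N : ℝ) + 1)) ∪ Set.Icc ((N : ℝ) / ((N : ℝ) + 1)) 1) =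
        ENNReal.ofReal ((2 / Real.log (2 + Real.sqrt 3)) *
          Real.log (1 + 1 / ((N : ℝ) + (Real.sqrt 3 - 1) / 2))) ∧
      mu {x : ℝ | x ∈ Set.Ioo (0 : ℝ) 1 ∧ Irrational x ∧ (N : ℤ) < a 1 x} =
        ENNReal.ofReal ((2 / Real.log (2 + Real.sqrt 3)) *
          Real.log ((2 * (N : ℝ) + Real.sqrt 3 + 1) / (2 * (N : ℝ) + Real.sqrt 3 - 1))) := by
  intro N hN
  have hN' : (1 : ℝ) ≤ N := Nat.one_le_cast.2 hN
  have hρ : 1 + 1 / ((N : ℝ) + (√3 - 1) / 2) = (2 * N + √3 + 1) / (2 * N + √3 - 1) := by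
    have h : 2 * (N : ℝ) + √3 - 1 ≠ 0 := by linarith [one_lt_sqrt_three]
    rw [show (N : ℝ) + (√3 - 1) / 2 = (2 * N + √3 - 1) / 2 by ring, one_div_div, one_add_div h]
    ring
  refine ⟨hρ ▸ mu_Icc_union_Icc hN', ?_⟩
  rw [← mu_Icc_union_Icc hN']
  refine measure_congr (eventuallyEq_set.2 ?_)
  filter_upwards [ae_mu_mem_Ioo_irrational] with x ⟨hx, hirr⟩
  simp only [hx, hirr, true_and]
  exact lt_a_one_iff hx hirr

end SCF
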